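/- arXiv:1210.0189 — 4 statements merged into one kernel-verified Lean document; each statement's English description precedes it below -/
import Mathlib

section
/- For all u, v ∈ V and all ring embeddings σ, σ' : E → ℝ, one has B_ℝ(p_σ(u⊗1), p_{σ'}(v⊗1)) = σ(Φ(u,v)) if σ = σ', and B_ℝ(p_σ(u⊗1), p_{σ'}(v⊗1)) = 0 if σ ≠ σ'. In particular the decomposition V ⊗_ℚ ℝ = ⊕_σ V_σ is orthogonal with respect to B_ℝ, and the restriction of B_ℝ to V_σ is the localization of Φ at σ. -/
open scoped TensorProduct

/-- The action of `e : E` on `ℝ ⊗[ℚ] V` (the `E`-module structure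
`e • (c ⊗ v) = c ⊗ (e • v)` on `V ⊗_ℚ ℝ`). -/
noncomputable def actR (E : Type*) {V : Type*} [Field E] [CharZero E]
    [AddCommGroup V] [Module E V] [Module ℚ V] [IsScalarTower ℚ E V] (e : E) :
    ℝ ⊗[ℚ] V →ₗ[ℝ] ℝ ⊗[ℚ] V :=
  LinearMap.baseChange ℝ ((LinearMap.lsmul E V e).restrictScalars ℚ)

/-- `V_σ = {ξ ∈ V ⊗_ℚ ℝ : e • ξ = σ(e) · ξ for all e ∈ E}`. -/
noncomputable def Vsig (E : Type*) {V : Type*} [Field E] [CharZero E]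
    [AddCommGroup V] [Module E V] [Module ℚ V] [IsScalarTower ℚ E V] (σ : E →+* ℝ) :
    Submodule ℝ (ℝ ⊗[ℚ] V) :=
  ⨅ e : E, LinearMap.ker (actR E e - σ e • LinearMap.id)

/-- Real embeddings are in bijection with complex embeddings for a totally real field. -/
noncomputable def realEmbEquiv (E : Type*) [Field E]
    (htotreal : ∀ (σ : E →+* ℂ) (x : E), (σ x).im = 0) :
    (E →+* ℝ) ≃ (E →+* ℂ) where
  toFun τ := Complex.ofRealHom.comp τ
  invFun σ :=
    { toFun := fun x => (σ x).re
      map_one' := by simp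
      map_mul' := fun x y => by
        simp [Complex.mul_re, htotreal σ x]
      map_zero' := by simp
      map_add' := fun x y => by simp }
  left_inv τ := by ext x; simp
  right_inv σ := by
    ext x
    apply Complex.ext
    · simp
    · simp [htotreal σ x]

theorem trace_totreal (E : Type*) [Field E] [NumberField E]
    (htotreal : ∀ (σ : E →+* ℂ) (x : E), (σ x).im = 0) (x : E) :
    ((Algebra.trace ℚ E x : ℚ) : ℝ) = ∑ τ : E →+* ℝ, τ x := by
  have key : ((Algebra.trace ℚ E x : ℚ) : ℂ) = ∑ σ : E →+* ℂ, σ x := by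
    have h1 := trace_eq_sum_embeddings (K := ℚ) (L := E) (E := ℂ) (x := x)
    have h2 : algebraMap ℚ ℂ (Algebra.trace ℚ E x) = ((Algebra.trace ℚ E x : ℚ) : ℂ) := by
      norm_num
    rw [h2] at h1
    rw [h1]
    exact Fintype.sum_equiv (RingHom.equivRatAlgHom (R := E) (S := ℂ)).symm
      (fun σ : E →ₐ[ℚ] ℂ => σ x) (fun σ : E →+* ℂ => σ x) (fun σ => rfl)
  have key2 : ((Algebra.trace ℚ E x : ℚ) : ℂ) = ((∑ τ : E →+* ℝ, τ x : ℝ) : ℂ) := by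
    rw [key, ← Equiv.sum_comp (realEmbEquiv E htotreal)]
    push_cast
    rfl
  exact_mod_cast key2

/-- `E` totally real, `Φ` a nondegenerate symmetric `E`-bilinear form on `V`,
`B` the `ℝ`-bilinear extension of `tr∘Φ` to `V ⊗_ℚ ℝ`, `p σ` the projection onto `V_σ`
determined by the internal direct sum decomposition `V ⊗_ℚ ℝ = ⊕_σ V_σ`.  Then
`B (p σ (u⊗1)) (p σ' (v⊗1)) = σ (Φ u v)` if `σ = σ'` and `= 0` if `σ ≠ σ'`; in particular
the decomposition is orthogonal with respect to `B` and the restriction of `B` to `V_σ`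
is the localization of `Φ` at `σ`. -/
theorem stmt2 (E V : Type*) [Field E] [NumberField E]
    (htotreal : ∀ (σ : E →+* ℂ) (x : E), (σ x).im = 0)
    [AddCommGroup V] [Module E V] [Module ℚ V] [IsScalarTower ℚ E V]
    [FiniteDimensional E V]
    (Φ : V → V → E)
    (hΦadd1 : ∀ x x' y, Φ (x + x') y = Φ x y + Φ x' y)
    (hΦsmul1 : ∀ (e : E) (x y : V), Φ (e • x) y = e * Φ x y)
    (hΦsymm : ∀ x y, Φ x y = Φ y x)
    (hΦnondeg : ∀ x, (∀ y, Φ x y = 0) → x = 0)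
    (B : (ℝ ⊗[ℚ] V) →ₗ[ℝ] (ℝ ⊗[ℚ] V) →ₗ[ℝ] ℝ)
    (hB : ∀ (c c' : ℝ) (u v : V),
      B (c ⊗ₜ[ℚ] u) (c' ⊗ₜ[ℚ] v) = c * c' * ((Algebra.trace ℚ E (Φ u v) : ℚ) : ℝ))
    [DecidableEq (E →+* ℝ)]
    (hInternal : DirectSum.IsInternal (fun σ : E →+* ℝ => Vsig E (V := V) σ))
    (p : (E →+* ℝ) → (ℝ ⊗[ℚ] V) →ₗ[ℝ] ℝ ⊗[ℚ] V)
    (hp1 : ∀ (σ : E →+* ℝ) (ξ : ℝ ⊗[ℚ] V), p σ ξ ∈ Vsig E (V := V) σ)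
    (hp2 : ∀ (σ : E →+* ℝ) (ξ : ℝ ⊗[ℚ] V), ξ ∈ Vsig E (V := V) σ → p σ ξ = ξ)
    (hp3 : ∀ (σ σ' : E →+* ℝ), σ ≠ σ' →
      ∀ ξ ∈ Vsig E (V := V) σ', p σ ξ = 0) :
    (∀ (u v : V) (σ σ' : E →+* ℝ),
      (σ = σ' → B (p σ ((1 : ℝ) ⊗ₜ[ℚ] u)) (p σ' ((1 : ℝ) ⊗ₜ[ℚ] v)) = σ (Φ u v)) ∧
      (σ ≠ σ' → B (p σ ((1 : ℝ) ⊗ₜ[ℚ] u)) (p σ' ((1 : ℝ) ⊗ₜ[ℚ] v)) = 0)) ∧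
    (∀ (σ σ' : E →+* ℝ), σ ≠ σ' →
      ∀ ξ ∈ Vsig E (V := V) σ, ∀ ζ ∈ Vsig E (V := V) σ', B ξ ζ = 0) := by
  -- action on simple tensors
  have actR_tmul : ∀ (e : E) (c : ℝ) (u : V),
      actR E (V := V) e (c ⊗ₜ[ℚ] u) = c ⊗ₜ[ℚ] (e • u) := by
    intro e c u
    simp [actR]
  -- membership in Vsig
  have memV : ∀ {σ : E →+* ℝ} {ξ : ℝ ⊗[ℚ] V}, ξ ∈ Vsig E (V := V) σ →
      ∀ e : E, actR E (V := V) e ξ = σ e • ξ := by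
    intro σ ξ h e
    have h2 := (Submodule.mem_iInf _).mp h e
    rw [LinearMap.mem_ker, LinearMap.sub_apply, LinearMap.smul_apply, LinearMap.id_apply,
      sub_eq_zero] at h2
    exact h2
  -- B is E-balanced
  have Bbal : ∀ (e : E) (ξ ζ : ℝ ⊗[ℚ] V),
      B (actR E (V := V) e ξ) ζ = B ξ (actR E (V := V) e ζ) := by
    intro e ξ ζ
    induction ξ using TensorProduct.induction_on with
    | zero => simp
    | add x y hx hy => simp [map_add, hx, hy]
    | tmul c u =>
      induction ζ using TensorProduct.induction_on with
      | zero => simp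
      | add x y hx hy => simp [map_add, hx, hy]
      | tmul c' v =>
        rw [actR_tmul, actR_tmul, hB, hB]
        have : Φ (e • u) v = Φ u (e • v) := by
          rw [hΦsmul1, hΦsymm u (e • v), hΦsmul1, hΦsymm]
        rw [this]
  -- orthogonality
  have orth : ∀ (σ σ' : E →+* ℝ), σ ≠ σ' →
      ∀ ξ ∈ Vsig E (V := V) σ, ∀ ζ ∈ Vsig E (V := V) σ', B ξ ζ = 0 := by
    intro σ σ' hne ξ hξ ζ hζ
    have hex : ∃ e : E, σ e ≠ σ' e := by
      by_contra hc
      push_neg at hc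
      exact hne (RingHom.ext hc)
    obtain ⟨e, he⟩ := hex
    have h1 : B (actR E (V := V) e ξ) ζ = B ξ (actR E (V := V) e ζ) := Bbal e ξ ζ
    rw [memV hξ e, memV hζ e, map_smul, LinearMap.smul_apply, map_smul] at h1
    have h2 : (σ e - σ' e) * B ξ ζ = 0 := by
      simp only [smul_eq_mul] at h1
      ring_nf
      ring_nf at h1
      linarith
    rcases mul_eq_zero.mp h2 with h | h
    · exact absurd (sub_eq_zero.mp h) he
    · exact h
  -- decomposition via projections
  have hdecomp : ∀ ξ : ℝ ⊗[ℚ] V, ∑ τ : E →+* ℝ, p τ ξ = ξ := by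
    intro ξ
    have hmem : ξ ∈ ⨆ τ : E →+* ℝ, Vsig E (V := V) τ := by
      rw [hInternal.submodule_iSup_eq_top]; trivial
    obtain ⟨f, hf, hsum⟩ := (Submodule.mem_iSup_iff_exists_finsupp _ ξ).mp hmem
    have hpf : ∀ σ : E →+* ℝ, p σ ξ = f σ := by
      intro σ
      rw [← hsum, Finsupp.sum, map_sum]
      rw [Finset.sum_eq_single σ]
      · exact hp2 σ (f σ) (hf σ)
      · intro τ _ hτ
        exact hp3 σ τ (Ne.symm hτ) (f τ) (hf τ)
      · intro hσ
        rw [Finsupp.notMem_support_iff.mp hσ, map_zero]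
    calc ∑ τ : E →+* ℝ, p τ ξ = ∑ τ : E →+* ℝ, f τ := by
          exact Finset.sum_congr rfl fun τ _ => hpf τ
      _ = ∑ τ ∈ f.support, f τ := (Finset.sum_subset (Finset.subset_univ _)
          (fun τ _ hτ => Finsupp.notMem_support_iff.mp hτ)).symm
      _ = ξ := by rw [← hsum]; rfl
  -- projections intertwine the action
  have pact : ∀ (σ : E →+* ℝ) (e : E) (ξ : ℝ ⊗[ℚ] V),
      p σ (actR E (V := V) e ξ) = σ e • p σ ξ := by
    intro σ e ξ
    conv_lhs => rw [← hdecomp ξ, map_sum, map_sum]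
    have : ∀ τ : E →+* ℝ, p σ (actR E (V := V) e (p τ ξ)) =
        if τ = σ then σ e • p σ ξ else 0 := by
      intro τ
      rw [memV (hp1 τ ξ) e, map_smul]
      by_cases hτ : τ = σ
      · subst hτ
        rw [if_pos rfl, hp2 τ (p τ ξ) (hp1 τ ξ)]
      · rw [if_neg hτ, hp3 σ τ (Ne.symm hτ) (p τ ξ) (hp1 τ ξ), smul_zero]
    rw [Finset.sum_congr rfl fun τ _ => this τ, Finset.sum_ite_eq' Finset.univ σ
      (fun _ => σ e • p σ ξ)]
    simp
  -- the key sum identity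
  have Bsum : ∀ (e : E) (u v : V),
      ∑ τ : E →+* ℝ, τ e * B (p τ ((1:ℝ) ⊗ₜ[ℚ] u)) (p τ ((1:ℝ) ⊗ₜ[ℚ] v)) =
      ∑ τ : E →+* ℝ, τ e * τ (Φ u v) := by
    intro e u v
    have lhs : B ((1:ℝ) ⊗ₜ[ℚ] (e • u)) ((1:ℝ) ⊗ₜ[ℚ] v) =
        ∑ τ : E →+* ℝ, τ e * B (p τ ((1:ℝ) ⊗ₜ[ℚ] u)) (p τ ((1:ℝ) ⊗ₜ[ℚ] v)) := by
      have term : ∀ τ τ' : E →+* ℝ,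
          B (p τ (actR E (V := V) e ((1:ℝ) ⊗ₜ[ℚ] u))) (p τ' ((1:ℝ) ⊗ₜ[ℚ] v)) =
          if τ' = τ then τ e * B (p τ ((1:ℝ) ⊗ₜ[ℚ] u)) (p τ ((1:ℝ) ⊗ₜ[ℚ] v)) else 0 := by
        intro τ τ'
        by_cases h : τ' = τ
        · subst h
          rw [if_pos rfl, pact, map_smul, LinearMap.smul_apply, smul_eq_mul]
        · rw [if_neg h]
          exact orth τ τ' (fun hh => h hh.symm) _ (hp1 _ _) _ (hp1 _ _)
      conv_lhs => rw [← actR_tmul e 1 u,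
        ← hdecomp (actR E (V := V) e ((1:ℝ) ⊗ₜ[ℚ] u)), ← hdecomp ((1:ℝ) ⊗ₜ[ℚ] v)]
      simp only [map_sum, LinearMap.sum_apply]
      rw [Finset.sum_congr rfl (fun τ' _ => Finset.sum_congr rfl (fun τ _ => term τ τ'))]
      simp [Finset.sum_ite_eq]
    have rhs : B ((1:ℝ) ⊗ₜ[ℚ] (e • u)) ((1:ℝ) ⊗ₜ[ℚ] v) =
        ∑ τ : E →+* ℝ, τ e * τ (Φ u v) := by
      rw [hB, hΦsmul1, one_mul, one_mul, trace_totreal E htotreal]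
      exact Finset.sum_congr rfl fun τ _ => map_mul τ e (Φ u v)
    rw [← lhs, rhs]
  -- conclude the diagonal values by linear independence of characters
  have diag : ∀ (u v : V) (σ : E →+* ℝ),
      B (p σ ((1:ℝ) ⊗ₜ[ℚ] u)) (p σ ((1:ℝ) ⊗ₜ[ℚ] v)) = σ (Φ u v) := by
    intro u v σ
    set c : (E →+* ℝ) → ℝ := fun τ =>
      B (p τ ((1:ℝ) ⊗ₜ[ℚ] u)) (p τ ((1:ℝ) ⊗ₜ[ℚ] v)) - τ (Φ u v) with hc
    have li : LinearIndependent ℝ (fun (τ : E →+* ℝ) => ((τ : E →* ℝ) : E → ℝ)) :=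
      (linearIndependent_monoidHom E ℝ).comp (fun τ : E →+* ℝ => (τ : E →* ℝ))
        (fun τ τ' h => RingHom.ext fun x => DFunLike.congr_fun h x)
    have hzero : ∑ τ : E →+* ℝ, c τ • ((τ : E →* ℝ) : E → ℝ) = 0 := by
      funext e
      rw [Finset.sum_apply]
      simp only [Pi.smul_apply, smul_eq_mul, Pi.zero_apply, hc, sub_mul, MonoidHom.coe_coe]
      rw [Finset.sum_sub_distrib, sub_eq_zero]
      calc ∑ τ : E →+* ℝ, B (p τ ((1:ℝ) ⊗ₜ[ℚ] u)) (p τ ((1:ℝ) ⊗ₜ[ℚ] v)) * τ e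
          = ∑ τ : E →+* ℝ, τ e * B (p τ ((1:ℝ) ⊗ₜ[ℚ] u)) (p τ ((1:ℝ) ⊗ₜ[ℚ] v)) :=
            Finset.sum_congr rfl fun τ _ => mul_comm _ _
        _ = ∑ τ : E →+* ℝ, τ e * τ (Φ u v) := Bsum e u v
        _ = ∑ τ : E →+* ℝ, τ (Φ u v) * τ e :=
            Finset.sum_congr rfl fun τ _ => mul_comm _ _
    have := Fintype.linearIndependent_iff.mp li c hzero σ
    rw [hc] at this
    exact sub_eq_zero.mp this
  refine ⟨fun u v σ σ' => ⟨fun h => ?_, fun h => ?_⟩, orth⟩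
  · subst h; exact diag u v σ
  · exact orth σ σ' h _ (hp1 σ _) _ (hp1 σ' _)
end

section
/- Suppose u₁,…,u_m is a basis of V over E orthogonal with respect to Φ, and set d_j := Φ(u_j,u_j); each d_j is fixed by ι and hence lies in E₀, and d_j ≠ 0. Then the ℚ-quadratic form Q(x) := Tr_{E/ℚ}(Φ(x,x)) on V is equivalent over ℚ (isometric as a quadratic form on a ℚ-vector space) to the orthogonal direct sum ⊕_{j=1}^m ( 2·Tr_{E₀}⟨d_j⟩ ⊕ 2·Tr_{E₀}⟨−θ²·d_j⟩ ), where 2·q denotes the quadratic form q multiplied by the scalar 2. -/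
/-! In the orthogonal basis `Φ(x, x) = ∑ⱼ cⱼ ι(cⱼ) dⱼ`, where `cⱼ` are the coordinates of `x`,
and `dⱼ` is `ι`-fixed, hence in `E₀`. Splitting every coordinate as `cⱼ = aⱼ + bⱼ θ` with
`aⱼ, bⱼ ∈ E₀` is a `ℚ`-linear change of variables, and `cⱼ ι(cⱼ) = aⱼ² − θ² bⱼ²`. So every
summand lies in `E₀`, on which `Tr_{E/ℚ} = 2 Tr_{E₀/ℚ}` because `[E : E₀] = 2`. -/

namespace LinearMap

variable {R M M₁ n : Type*} [CommSemiring R] [AddCommMonoid M] [AddCommMonoid M₁]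
  [Module R M] [Module R M₁] [Fintype n] {I I' : R →+* R} {B : M →ₛₗ[I] M →ₛₗ[I'] M₁}

theorem IsOrthoᵢ.apply_self_eq_sum {v : Module.Basis n R M} (h : B.IsOrthoᵢ v) (x : M) :
    B x x = ∑ i, I (v.repr x i) • I' (v.repr x i) • B (v i) (v i) := by
  classical
  conv_lhs => rw [← v.sum_repr x]
  simp only [map_sum, map_smulₛₗ, LinearMap.sum_apply, LinearMap.smul_apply]
  refine Finset.sum_congr rfl fun i _ => ?_
  rw [Finset.sum_eq_single i (fun j _ hji => by rw [h hji, smul_zero]) (by simp), smul_comm]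

end LinearMap

theorem Algebra.trace_algebraMap_of_tower (R K L : Type*) [Field R] [Field K] [Field L]
    [Algebra R K] [Algebra K L] [Algebra R L] [IsScalarTower R K L]
    [FiniteDimensional R K] [FiniteDimensional K L] (w : K) :
    trace R L (algebraMap K L w) = Module.finrank K L • trace R K w := by
  rw [← trace_trace (S := K), trace_algebraMap, map_nsmul]

section QuadraticExtension

variable {K L : Type*} [Field K] [Field L] [Algebra K L] {θ : L}

theorem injective_coprod_toSpanSingleton (hθ : θ ∉ Set.range (algebraMap K L)) :
    Function.Injective ((Algebra.linearMap K L).coprod (LinearMap.toSpanSingleton K L θ)) := by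
  refine (injective_iff_map_eq_zero _).mpr fun ⟨a, b⟩ hab => ?_
  simp only [LinearMap.coprod_apply, Algebra.linearMap_apply, LinearMap.toSpanSingleton_apply,
    Algebra.smul_def] at hab
  obtain rfl : b = 0 := by
    by_contra hb
    have hb' : algebraMap K L b ≠ 0 := (map_ne_zero _).mpr hb
    exact hθ ⟨-a / b, by rw [map_div₀, map_neg, div_eq_iff hb']; linear_combination -hab⟩
  simpa using hab

variable (hθ : θ ∉ Set.range (algebraMap K L))
  (hgen : ∀ x : L, ∃ a b : K, x = algebraMap K L a + algebraMap K L b * θ)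

include hθ hgen in
theorem bijective_coprod_toSpanSingleton :
    Function.Bijective ((Algebra.linearMap K L).coprod (LinearMap.toSpanSingleton K L θ)) := by
  refine ⟨injective_coprod_toSpanSingleton hθ, fun x => ?_⟩
  obtain ⟨a, b, rfl⟩ := hgen x
  exact ⟨(a, b), by simp [Algebra.smul_def]⟩

noncomputable def prodEquivAddMul : (K × K) ≃ₗ[K] L :=
  .ofBijective _ (bijective_coprod_toSpanSingleton hθ hgen)

@[simp]
theorem prodEquivAddMul_apply (p : K × K) :
    prodEquivAddMul hθ hgen p = algebraMap K L p.1 + algebraMap K L p.2 * θ := by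
  simp [prodEquivAddMul, Algebra.smul_def]

include hθ hgen in
theorem finrank_eq_two_of_forall_eq_add_mul : Module.finrank K L = 2 := by
  simp [← (prodEquivAddMul hθ hgen).finrank_eq]

include hθ hgen in
theorem finite_of_forall_eq_add_mul : Module.Finite K L :=
  .equiv (prodEquivAddMul hθ hgen)

section Conjugation

variable {σ : L →+* L} (hσ : ∀ a : K, σ (algebraMap K L a) = algebraMap K L a) (hσθ : σ θ = -θ)
include hσ hσθ

theorem map_add_mul_eq_sub_mul (a b : K) :
    σ (algebraMap K L a + algebraMap K L b * θ) = algebraMap K L a - algebraMap K L b * θ := by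
  rw [map_add, map_mul, hσ, hσ, hσθ, mul_neg, sub_eq_add_neg]

theorem add_mul_mul_map_eq_algebraMap {θ₀ : K} (hθ₀ : algebraMap K L θ₀ = θ ^ 2) (a b : K) :
    (algebraMap K L a + algebraMap K L b * θ) * σ (algebraMap K L a + algebraMap K L b * θ) =
      algebraMap K L (a ^ 2 - θ₀ * b ^ 2) := by
  rw [map_add_mul_eq_sub_mul hσ hσθ, map_sub, map_mul, map_pow, map_pow, hθ₀]
  ring

include hθ hgen in
theorem exists_algebraMap_eq_of_map_eq_self [NeZero (2 : L)] {x : L} (hx : σ x = x) :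
    ∃ a : K, algebraMap K L a = x := by
  obtain ⟨a, b, rfl⟩ := hgen x
  rw [map_add_mul_eq_sub_mul hσ hσθ] at hx
  have hθ0 : θ ≠ 0 := fun h => hθ ⟨0, by rw [map_zero, h]⟩
  have hb : b = 0 := by
    have : (2 : L) * (algebraMap K L b * θ) = 0 := by linear_combination -hx
    simpa [two_ne_zero, hθ0] using this
  exact ⟨a, by simp [hb]⟩

include hθ hgen in
theorem trace_add_mul_mul_map_mul_algebraMap (R : Type*) [Field R] [Algebra R K] [Algebra R L]
    [IsScalarTower R K L] [FiniteDimensional R K] {θ₀ : K} (hθ₀ : algebraMap K L θ₀ = θ ^ 2)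
    (a b c : K) :
    Algebra.trace R L ((algebraMap K L a + algebraMap K L b * θ) *
        σ (algebraMap K L a + algebraMap K L b * θ) * algebraMap K L c) =
      2 * Algebra.trace R K (c * a ^ 2) + 2 * Algebra.trace R K (-θ₀ * c * b ^ 2) := by
  have := finite_of_forall_eq_add_mul hθ hgen
  rw [add_mul_mul_map_eq_algebraMap hσ hσθ hθ₀, ← map_mul,
    show (a ^ 2 - θ₀ * b ^ 2) * c = c * a ^ 2 + -θ₀ * c * b ^ 2 by ring,
    Algebra.trace_algebraMap_of_tower, finrank_eq_two_of_forall_eq_add_mul hθ hgen, map_add,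
    two_nsmul, two_mul, two_mul]
  abel

end Conjugation

end QuadraticExtension

theorem stmt7_general (E₀ E V : Type*) [Field E₀] [NumberField E₀] [Field E] [NumberField E]
    [Algebra E₀ E] [IsScalarTower ℚ E₀ E]
    (θ : E) (hθ : θ ∉ Set.range (algebraMap E₀ E))
    (θ0 : E₀) (hθ0 : algebraMap E₀ E θ0 = θ ^ 2)
    (hgen : ∀ x : E, ∃ a b : E₀, x = algebraMap E₀ E a + algebraMap E₀ E b * θ)
    (ι : E →+* E) (hιfix : ∀ a : E₀, ι (algebraMap E₀ E a) = algebraMap E₀ E a)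
    (hιθ : ι θ = -θ)
    [AddCommGroup V] [Module E V] [Module ℚ V] [IsScalarTower ℚ E V]
    (Φ : V → V → E)
    (hΦadd1 : ∀ x x' y, Φ (x + x') y = Φ x y + Φ x' y)
    (hΦsmul1 : ∀ (e : E) (x y : V), Φ (e • x) y = e * Φ x y)
    (hΦadd2 : ∀ x y y', Φ x (y + y') = Φ x y + Φ x y')
    (hΦsmul2 : ∀ (e : E) (x y : V), Φ x (e • y) = ι e * Φ x y)
    (hΦherm : ∀ x y, Φ y x = ι (Φ x y))
    (hΦnondeg : ∀ x, (∀ y, Φ x y = 0) → x = 0)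
    (m : ℕ) (u : Module.Basis (Fin m) E V)
    (horth : ∀ i j : Fin m, i ≠ j → Φ (u i) (u j) = 0)
    (d : Fin m → E) (hd : ∀ j, d j = Φ (u j) (u j)) :
    (∀ j, ι (d j) = d j) ∧
    ∃ d₀ : Fin m → E₀,
      (∀ j, algebraMap E₀ E (d₀ j) = d j ∧ d₀ j ≠ 0) ∧
      ∃ g : V ≃ₗ[ℚ] (Fin m → E₀ × E₀), ∀ x : V,
        Algebra.trace ℚ E (Φ x x) =
          ∑ j, (2 * Algebra.trace ℚ E₀ (d₀ j * ((g x j).1) ^ 2) +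
                2 * Algebra.trace ℚ E₀ (-θ0 * d₀ j * ((g x j).2) ^ 2)) := by
  let B : V →ₗ[E] V →ₛₗ[ι] E := LinearMap.mk₂'ₛₗ _ ι Φ hΦadd1 hΦsmul1 hΦadd2 hΦsmul2
  have hBΦ (x y : V) : B x y = Φ x y := rfl
  have hB : B.IsOrthoᵢ u := horth
  have hfix (j : Fin m) : ι (d j) = d j := by rw [hd]; exact (hΦherm _ _).symm
  choose d₀ hd₀ using fun j => exists_algebraMap_eq_of_map_eq_self hθ hgen hιfix hιθ (hfix j)
  have hd₀ne (j : Fin m) : d₀ j ≠ 0 := by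
    intro h
    refine hB.not_isOrtho_basis_self_of_separatingLeft hΦnondeg j ?_
    rw [hBΦ, ← hd, ← hd₀, h, map_zero]
  let e := prodEquivAddMul hθ hgen
  let g : V ≃ₗ[ℚ] (Fin m → E₀ × E₀) :=
    (u.equivFun.restrictScalars ℚ).trans (.piCongrRight fun _ => e.symm.restrictScalars ℚ)
  have hg (x : V) (j : Fin m) : e (g x j) = u.repr x j := by simp [g]
  refine ⟨hfix, d₀, fun j => ⟨hd₀ j, hd₀ne j⟩, g, fun x => ?_⟩
  rw [← hBΦ, hB.apply_self_eq_sum, map_sum]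
  refine Finset.sum_congr rfl fun j _ => ?_
  rw [← hg, smul_eq_mul, smul_eq_mul, RingHom.id_apply, ← mul_assoc, hBΦ, ← hd, ← hd₀,
    prodEquivAddMul_apply, trace_add_mul_mul_map_mul_algebraMap hθ hgen hιfix hιθ ℚ hθ0]

/-- `E = E₀(θ)` a CM field with CM involution `ι`, `Φ` a nondegenerate
hermitian sesquilinear form on the `m`-dimensional `E`-vector space `V`, `u₁,…,u_m` a
`Φ`-orthogonal `E`-basis, `d_j = Φ(u_j,u_j)`.  Each `d_j` is fixed by `ι`, hence lies
in `E₀`, and `d_j ≠ 0`; and the `ℚ`-quadratic form `Q(x) = Tr_{E/ℚ}(Φ(x,x))` on `V` is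
equivalent over `ℚ` to `⊕_{j=1}^m ( 2·Tr_{E₀}⟨d_j⟩ ⊕ 2·Tr_{E₀}⟨−θ²·d_j⟩ )`. -/
theorem stmt7 (E₀ E V : Type*) [Field E₀] [NumberField E₀] [Field E] [NumberField E]
    [Algebra E₀ E] [IsScalarTower ℚ E₀ E]
    (htotreal : ∀ (σ : E₀ →+* ℂ) (x : E₀), (σ x).im = 0)
    (s : ℕ) (hs : Module.finrank ℚ E₀ = s)
    (θ : E) (hθ : θ ∉ Set.range (algebraMap E₀ E))
    (θ0 : E₀) (hθ0 : algebraMap E₀ E θ0 = θ ^ 2)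
    (hθ0neg : ∀ σ : E₀ →+* ℝ, σ θ0 < 0)
    (hgen : ∀ x : E, ∃ a b : E₀, x = algebraMap E₀ E a + algebraMap E₀ E b * θ)
    (ι : E →+* E) (hιfix : ∀ a : E₀, ι (algebraMap E₀ E a) = algebraMap E₀ E a)
    (hιθ : ι θ = -θ)
    [AddCommGroup V] [Module E V] [Module ℚ V] [IsScalarTower ℚ E V]
    (Φ : V → V → E)
    (hΦadd1 : ∀ x x' y, Φ (x + x') y = Φ x y + Φ x' y)
    (hΦsmul1 : ∀ (e : E) (x y : V), Φ (e • x) y = e * Φ x y)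
    (hΦadd2 : ∀ x y y', Φ x (y + y') = Φ x y + Φ x y')
    (hΦsmul2 : ∀ (e : E) (x y : V), Φ x (e • y) = ι e * Φ x y)
    (hΦherm : ∀ x y, Φ y x = ι (Φ x y))
    (hΦnondeg : ∀ x, (∀ y, Φ x y = 0) → x = 0)
    (m : ℕ) (u : Module.Basis (Fin m) E V)
    (horth : ∀ i j : Fin m, i ≠ j → Φ (u i) (u j) = 0)
    (d : Fin m → E) (hd : ∀ j, d j = Φ (u j) (u j)) :
    (∀ j, ι (d j) = d j) ∧
    ∃ d₀ : Fin m → E₀,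
      (∀ j, algebraMap E₀ E (d₀ j) = d j ∧ d₀ j ≠ 0) ∧
      ∃ g : V ≃ₗ[ℚ] (Fin m → E₀ × E₀), ∀ x : V,
        Algebra.trace ℚ E (Φ x x) =
          ∑ j, (2 * Algebra.trace ℚ E₀ (d₀ j * ((g x j).1) ^ 2) +
                2 * Algebra.trace ℚ E₀ (-θ0 * d₀ j * ((g x j).2) ^ 2)) :=
  stmt7_general E₀ E V θ hθ θ0 hθ0 hgen ι hιfix hιθ Φ hΦadd1 hΦsmul1 hΦadd2 hΦsmul2 hΦherm hΦnondeg
    m u horth d hd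
end

section
/- Suppose u₁,…,u_m is a basis of V over E orthogonal with respect to Φ, and set d_j := Φ(u_j,u_j). Then for any ℚ-basis of V, the determinant of the Gram matrix of the bilinear form tr∘Φ with respect to that basis equals d_E^m · N_{E/ℚ}(d₁·d₂·⋯·d_m) · q² for some nonzero rational number q, where d_E denotes the discriminant of the number field E and N_{E/ℚ} its field norm. -/
/-!
Let `ω` be a `ℚ`-basis of `E` (the integral basis, whose discriminant is `d_E`). In the
`ℚ`-basis `(ω_i u_j)` of `V` the Gram matrix of `tr∘Φ` is block diagonal, the `j`-th block
`(Tr(d_j ω_i ω_k))_{i,k}` being the transpose of the matrix of multiplication by `d_j`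
times the trace matrix of `ω`; so its determinant is `N(d_j) d_E`. Any other `ℚ`-basis
changes the Gram determinant by the square of the invertible transition determinant.
-/

open Module Matrix
open LinearMap (BilinForm)

theorem Algebra.det_of_trace_mul_mul {F K ι : Type*} [Field F] [Field K] [Algebra F K]
    [Fintype ι] [DecidableEq ι] (ω : Basis ι F K) (a : K) :
    (Matrix.of fun i k => Algebra.trace F K (a * (ω i * ω k))).det =
      Algebra.norm F a * Algebra.discr F ω := by
  have h : (Matrix.of fun i k => Algebra.trace F K (a * (ω i * ω k))) =
      (Algebra.leftMulMatrix ω a)ᵀ * Algebra.traceMatrix F ω := by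
    ext i k
    have hrepr : a * (ω i * ω k) = (∑ l, ω.repr (a * ω i) l • ω l) * ω k := by
      rw [ω.sum_repr]; ring
    simp only [of_apply, mul_apply, transpose_apply, hrepr, Finset.sum_mul, map_sum,
      smul_mul_assoc, map_smul, Algebra.leftMulMatrix_eq_repr_mul, Algebra.traceMatrix_apply,
      Algebra.traceForm_apply, smul_eq_mul]
  rw [h, det_mul, det_transpose, ← Algebra.norm_eq_matrix_det, Algebra.discr_def]

namespace LinearMap.BilinForm

section TraceForm

variable {F K V : Type*} [Field F] [Field K] [Algebra F K] [AddCommGroup V] [Module K V]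
  [Module F V] [IsScalarTower F K V] {ι ι' : Type*} [Fintype ι] [Fintype ι'] [DecidableEq ι] [DecidableEq ι']

theorem toMatrix_compBilinForm_trace_smulTower (B : BilinForm K V)
    (ω : Basis ι F K) (u : Basis ι' K V) (horth : ∀ j l, j ≠ l → B (u j) (u l) = 0) :
    BilinForm.toMatrix (ω.smulTower u) ((Algebra.trace F K).compBilinForm B) =
      blockDiagonal fun j =>
        Matrix.of fun i k => Algebra.trace F K (B (u j) (u j) * (ω i * ω k)) := by
  ext ⟨i, j⟩ ⟨k, l⟩
  rw [BilinForm.toMatrix_apply, Basis.smulTower_apply, Basis.smulTower_apply, blockDiagonal_apply]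
  simp only [compBilinForm_apply_apply, map_smul, smul_apply, smul_eq_mul]
  by_cases hjl : j = l
  · subst hjl
    simp only [of_apply]
    congr 1; ring
  · rw [horth j l hjl, if_neg hjl, mul_zero, mul_zero, map_zero]

theorem det_toMatrix_compBilinForm_trace_smulTower [FiniteDimensional F K]
    (B : BilinForm K V) (ω : Basis ι F K) (u : Basis ι' K V)
    (horth : ∀ j l, j ≠ l → B (u j) (u l) = 0) :
    (BilinForm.toMatrix (ω.smulTower u) ((Algebra.trace F K).compBilinForm B)).det =
      Algebra.discr F ω ^ Fintype.card ι' * Algebra.norm F (∏ j, B (u j) (u j)) := by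
  rw [toMatrix_compBilinForm_trace_smulTower B ω u horth, det_blockDiagonal, map_prod]
  simp only [Algebra.det_of_trace_mul_mul, Finset.prod_mul_distrib, Finset.prod_const,
    Finset.card_univ]
  ring

end TraceForm

theorem det_toMatrix_reindex {R M ι ι' : Type*} [CommRing R] [AddCommGroup M] [Module R M]
    [Fintype ι] [DecidableEq ι] [Fintype ι'] [DecidableEq ι'] (B : BilinForm R M)
    (b : Basis ι R M) (e : ι ≃ ι') :
    (BilinForm.toMatrix (b.reindex e) B).det = (BilinForm.toMatrix b B).det := by
  have h : BilinForm.toMatrix (b.reindex e) B = reindex e e (BilinForm.toMatrix b B) := by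
    ext i j
    simp only [BilinForm.toMatrix_apply, Basis.reindex_apply, reindex_apply, submatrix_apply]
  rw [h, det_reindex_self]

theorem det_toMatrix_eq_mul_sq {R M ι ι' : Type*} [CommRing R] [AddCommGroup M]
    [Module R M] [Fintype ι] [DecidableEq ι] [Fintype ι'] [DecidableEq ι']
    (B : BilinForm R M) (b : Basis ι R M) (c : Basis ι' R M) :
    ∃ q : R, IsUnit q ∧ (BilinForm.toMatrix b B).det = (BilinForm.toMatrix c B).det * q ^ 2 := by
  nontriviality R
  let c' := c.reindex (c.indexEquiv b)
  let := c'.invertibleToMatrix b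
  refine ⟨(c'.toMatrix b).det, isUnit_det_of_invertible _, ?_⟩
  rw [← toMatrix_mul_basis_toMatrix c' b B, det_mul, det_mul, det_transpose,
    det_toMatrix_reindex]
  ring

end LinearMap.BilinForm

theorem stmt8_general (E V : Type*) [Field E] [NumberField E]
    [AddCommGroup V] [Module E V] [Module ℚ V] [IsScalarTower ℚ E V]
    (Φ : V → V → E)
    (hΦadd1 : ∀ x x' y, Φ (x + x') y = Φ x y + Φ x' y)
    (hΦsmul1 : ∀ (e : E) (x y : V), Φ (e • x) y = e * Φ x y)
    (hΦsymm : ∀ x y, Φ x y = Φ y x)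
    (m : ℕ) (u : Module.Basis (Fin m) E V)
    (horth : ∀ i j : Fin m, i ≠ j → Φ (u i) (u j) = 0)
    (d : Fin m → E) (hd : ∀ j, d j = Φ (u j) (u j))
    (κ : Type) [Fintype κ] [DecidableEq κ] (b : Module.Basis κ ℚ V) :
    ∃ q : ℚ, q ≠ 0 ∧
      (Matrix.of fun i j : κ => Algebra.trace ℚ E (Φ (b i) (b j))).det =
        ((NumberField.discr E : ℚ)) ^ m * Algebra.norm ℚ (∏ j, d j) * q ^ 2 := by
  let B : BilinForm E V := LinearMap.mk₂ E Φ hΦadd1 hΦsmul1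
    (fun x y y' => by rw [hΦsymm, hΦadd1, hΦsymm y, hΦsymm y'])
    (fun e x y => by rw [hΦsymm, hΦsmul1, hΦsymm, smul_eq_mul])
  let T := (Algebra.trace ℚ E).compBilinForm B
  let c := (NumberField.integralBasis E).smulTower u
  have hc : (LinearMap.BilinForm.toMatrix c T).det =
      (NumberField.discr E : ℚ) ^ m * Algebra.norm ℚ (∏ j, d j) := by
    rw [LinearMap.BilinForm.det_toMatrix_compBilinForm_trace_smulTower B _ u horth,
      Fintype.card_fin, NumberField.coe_discr, funext hd]
    rfl
  obtain ⟨q, hq, hbc⟩ := LinearMap.BilinForm.det_toMatrix_eq_mul_sq T b c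
  refine ⟨q, hq.ne_zero, ?_⟩
  have hgram : (Matrix.of fun i j : κ => Algebra.trace ℚ E (Φ (b i) (b j))) =
      LinearMap.BilinForm.toMatrix b T := by
    ext i j
    rw [LinearMap.BilinForm.toMatrix_apply]
    rfl
  rw [hgram, hbc, hc]

/-- `E` totally real, `Φ` a nondegenerate symmetric `E`-bilinear form on
the `m`-dimensional `E`-vector space `V`, `u₁,…,u_m` a `Φ`-orthogonal basis,
`d_j = Φ(u_j,u_j)`.  For any `ℚ`-basis of `V`, the determinant of the Gram matrix of
`tr∘Φ` equals `d_E^m · N_{E/ℚ}(d₁⋯d_m) · q²` for some nonzero rational `q`, where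
`d_E` is the discriminant of `E` and `N_{E/ℚ}` the field norm. -/
theorem stmt8 (E V : Type*) [Field E] [NumberField E]
    (htotreal : ∀ (σ : E →+* ℂ) (x : E), (σ x).im = 0)
    [AddCommGroup V] [Module E V] [Module ℚ V] [IsScalarTower ℚ E V]
    (Φ : V → V → E)
    (hΦadd1 : ∀ x x' y, Φ (x + x') y = Φ x y + Φ x' y)
    (hΦsmul1 : ∀ (e : E) (x y : V), Φ (e • x) y = e * Φ x y)
    (hΦsymm : ∀ x y, Φ x y = Φ y x)
    (hΦnondeg : ∀ x, (∀ y, Φ x y = 0) → x = 0)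
    (m : ℕ) (u : Module.Basis (Fin m) E V)
    (horth : ∀ i j : Fin m, i ≠ j → Φ (u i) (u j) = 0)
    (d : Fin m → E) (hd : ∀ j, d j = Φ (u j) (u j))
    (κ : Type) [Fintype κ] [DecidableEq κ] (b : Module.Basis κ ℚ V) :
    ∃ q : ℚ, q ≠ 0 ∧
      (Matrix.of fun i j : κ => Algebra.trace ℚ E (Φ (b i) (b j))).det =
        ((NumberField.discr E : ℚ)) ^ m * Algebra.norm ℚ (∏ j, d j) * q ^ 2 :=
  stmt8_general E V Φ hΦadd1 hΦsmul1 hΦsymm m u horth d hd κ b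
end

section
/- Suppose m ≥ 2, u₁,…,u_m is a basis of V over E orthogonal with respect to Φ, d_j := Φ(u_j,u_j), and there is a ring embedding σ₀ : E → ℝ such that σ₀(d₁) > 0, σ₀(d₂) > 0, σ₀(d_j) < 0 for 3 ≤ j ≤ m, and σ(d_j) < 0 for every ring embedding σ : E → ℝ with σ ≠ σ₀ and every j. Then the real quadratic form ξ ↦ B_ℝ(ξ,ξ) on the (m·r)-dimensional ℝ-vector space V ⊗_ℚ ℝ has signature (2, m·r − 2), i.e. it is equivalent over ℝ to a diagonal quadratic form with exactly 2 coefficients equal to +1 and m·r − 2 coefficients equal to −1. -/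
/-!
Since `E` is totally real, `Tr_{E/ℚ} = ∑_σ σ` over the `r` embeddings `σ : E → ℝ`, so with
`ξ_{σ,j} := σ(j-th u-coordinate)` the orthogonality of the `u_j` gives
`B(ξ, ξ) = ∑_{σ,j} σ(d_j) ξ_{σ,j}²`. The coordinate map `ξ ↦ (ξ_{σ,j})` is injective because
`B`, the base change of the nondegenerate form `tr ∘ Φ`, is nondegenerate, hence bijective as both
sides have dimension `m·r`. Exactly two of the weights `σ(d_j)` are positive and none vanishes, so
rescaling by `√|σ(d_j)|` and reordering yields the signature `(2, m·r - 2)`.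
-/

open scoped TensorProduct

namespace NumberField

variable {E : Type*} [Field E]

theorem bijective_ofRealHom_comp (hE : ∀ (σ : E →+* ℂ) (x : E), (σ x).im = 0) :
    Function.Bijective (fun σ : E →+* ℝ => Complex.ofRealHom.comp σ) := by
  refine ⟨fun σ τ h => RingHom.ext fun x => Complex.ofReal_injective (RingHom.congr_fun h x),
    fun φ => ?_⟩
  have hφ : ComplexEmbedding.IsReal φ := ComplexEmbedding.isReal_iff.mpr <|
    RingHom.ext fun x => Complex.conj_eq_iff_im.mpr (hE φ x)
  exact ⟨hφ.embedding, RingHom.ext hφ.coe_embedding_apply⟩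

variable [NumberField E]

theorem card_ringHom_real (hE : ∀ (σ : E →+* ℂ) (x : E), (σ x).im = 0) :
    Fintype.card (E →+* ℝ) = Module.finrank ℚ E :=
  (Fintype.card_of_bijective (bijective_ofRealHom_comp hE)).trans (Embeddings.card E ℂ)

theorem trace_eq_sum_ringHom_real (hE : ∀ (σ : E →+* ℂ) (x : E), (σ x).im = 0) (x : E) :
    (Algebra.trace ℚ E x : ℝ) = ∑ σ : E →+* ℝ, σ x := by
  apply Complex.ofReal_injective
  rw [Complex.ofReal_ratCast, ← eq_ratCast (algebraMap ℚ ℂ), trace_eq_sum_embeddings,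
    Complex.ofReal_sum,
    ← Fintype.sum_equiv (RingHom.equivRatAlgHom E ℂ) (fun σ => σ x) _ fun _ => rfl]
  exact (Fintype.sum_bijective _ (bijective_ofRealHom_comp hE) _ _ fun _ => rfl).symm

end NumberField

namespace LinearMap.BilinForm

theorem apply_eq_sum_repr_mul_repr_of_orthogonal {K V ι : Type*} [Field K] [AddCommGroup V]
    [Module K V] [Fintype ι] (Φ : LinearMap.BilinForm K V) (u : Module.Basis ι K V)
    (horth : ∀ i j, i ≠ j → Φ (u i) (u j) = 0) (x y : V) :
    Φ x y = ∑ j, u.repr x j * u.repr y j * Φ (u j) (u j) := by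
  rw [← LinearMap.sum_repr_mul_repr_mul u u (B := Φ) x y, Finsupp.sum_fintype _ _ (by simp)]
  refine Finset.sum_congr rfl fun i _ => ?_
  rw [Finsupp.sum_fintype _ _ (by simp), Finset.sum_eq_single i (fun j _ hj => by
    rw [horth i j hj.symm, smul_zero, smul_zero]) (by simp)]
  simp only [smul_eq_mul, mul_assoc]

theorem _root_.LinearMap.SeparatingLeft.baseChange {K V : Type*} [Field K] [AddCommGroup V]
    [Module K V] [FiniteDimensional K V] {b : LinearMap.BilinForm K V} (hb : b.SeparatingLeft)
    (L : Type*) [Field L] [Algebra K L] :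
    (b.baseChange L).SeparatingLeft := by
  let w := Module.finBasis K V
  rw [LinearMap.separatingLeft_iff_det_ne_zero w] at hb
  have hmat : toMatrix₂ (w.baseChange L) (w.baseChange L) (b.baseChange L) =
      (algebraMap K L).mapMatrix (toMatrix₂ w w b) := by
    ext i j
    simp [toMatrix₂_apply, baseChange_tmul, Algebra.algebraMap_eq_smul_one]
  rw [LinearMap.separatingLeft_iff_det_ne_zero (w.baseChange L), hmat, ← RingHom.map_det]
  exact (map_ne_zero _).mpr hb

variable (K : Type*) {L V : Type*} [Field K] [Field L] [Algebra K L] [AddCommGroup V]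
  [Module K V] [Module L V] [IsScalarTower K L V]

noncomputable def traceComp (Φ : LinearMap.BilinForm L V) : LinearMap.BilinForm K V :=
  (Φ.restrictScalars₁₂ K K).compr₂ (Algebra.trace K L)

@[simp]
theorem traceComp_apply (Φ : LinearMap.BilinForm L V) (x y : V) :
    Φ.traceComp K x y = Algebra.trace K L (Φ x y) := rfl

variable {K}

theorem _root_.LinearMap.SeparatingLeft.traceComp [FiniteDimensional K L]
    [Algebra.IsSeparable K L] {Φ : LinearMap.BilinForm L V} (hΦ : Φ.SeparatingLeft) :
    (Φ.traceComp K).SeparatingLeft := by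
  intro x hx
  refine hΦ x fun y => (traceForm_nondegenerate K L).1 _ fun e => ?_
  rw [Algebra.traceForm_apply, mul_comm, ← smul_eq_mul, ← map_smul]
  exact hx (e • y)

end LinearMap.BilinForm

theorem Fintype.exists_equiv_fin_lt_iff {α : Type*} [Fintype α] (P : α → Prop) {n k : ℕ}
    (hn : Fintype.card α = n) (hk : Nat.card {a // P a} = k) :
    ∃ e : α ≃ Fin n, ∀ a, P a ↔ (e a : ℕ) < k := by
  classical
  rw [Nat.card_eq_fintype_card] at hk
  have hkn : k ≤ n := hn ▸ hk ▸ Fintype.card_subtype_le P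
  have hc : Fintype.card {a // ¬P a} = n - k := by
    rw [Fintype.card_subtype_compl, hn, hk]
  let e : α ≃ Fin n := (Equiv.sumCompl P).symm.trans <|
    ((Fintype.equivFinOfCardEq hk).sumCongr (Fintype.equivFinOfCardEq hc)).trans <|
      finSumFinEquiv.trans (finCongr (Nat.add_sub_cancel' hkn))
  refine ⟨e, fun a => ?_⟩
  by_cases h : P a
  · simp [e, Equiv.sumCompl_symm_apply_of_pos h, h]
  · simp [e, Equiv.sumCompl_symm_apply_of_neg h, h]

theorem exists_linearEquiv_sum_mul_sq_eq_signature {ι : Type*} [Fintype ι] (w : ι → ℝ)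
    (hw : ∀ i, w i ≠ 0) {n k : ℕ} (hn : Fintype.card ι = n) (hk : Nat.card {i // 0 < w i} = k) :
    ∃ g : (ι → ℝ) ≃ₗ[ℝ] (Fin n → ℝ), ∀ v, ∑ i, w i * v i ^ 2 =
      ∑ i : Fin n, (if (i : ℕ) < k then 1 else -1) * g v i ^ 2 := by
  obtain ⟨e, he⟩ := Fintype.exists_equiv_fin_lt_iff _ hn hk
  let S := QuadraticForm.isometryEquivSignWeightedSumSquares w
  refine ⟨S.toLinearEquiv.trans (LinearEquiv.funCongrLeft ℝ ℝ e.symm), fun v => ?_⟩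
  have hsign : ∀ a, (SignType.sign (w a) : ℝ) = if (e a : ℕ) < k then 1 else -1 := fun a => by
    rcases (hw a).lt_or_gt with h | h
    · rw [sign_neg h, if_neg ((he a).not.mp h.not_gt), SignType.coe_neg_one]
    · rw [sign_pos h, if_pos ((he a).mp h), SignType.coe_one]
  calc ∑ i, w i * v i ^ 2 = ∑ a, (if (e a : ℕ) < k then 1 else -1) * S v a ^ 2 := by
        simpa only [QuadraticMap.weightedSumSquares_apply, smul_eq_mul, hsign, _root_.sq]
          using (S.map_app v).symm
    _ = _ := Fintype.sum_equiv e _ _ fun a => by simp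

section Signs

variable {A : Type*} {m : ℕ} {f : A → Fin m → ℝ} {a₀ : A}
  (hpos : ∀ j : Fin m, (j : ℕ) < 2 → 0 < f a₀ j) (hneg₀ : ∀ j : Fin m, 2 ≤ (j : ℕ) → f a₀ j < 0)
  (hneg : ∀ a, a ≠ a₀ → ∀ j, f a j < 0)
include hpos hneg₀ hneg

theorem pos_iff_eq_and_lt_two_of_signs (a : A) (j : Fin m) : 0 < f a j ↔ a = a₀ ∧ (j : ℕ) < 2 := by
  by_cases ha : a = a₀
  · subst ha
    by_cases hj : (j : ℕ) < 2
    · exact iff_of_true (hpos j hj) ⟨rfl, hj⟩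
    · exact iff_of_false (hneg₀ j (by omega)).not_gt fun h => hj h.2
  · exact iff_of_false (hneg a ha j).not_gt fun h => ha h.1

theorem ne_zero_of_signs (a : A) (j : Fin m) : f a j ≠ 0 := by
  by_cases ha : a = a₀
  · subst ha
    by_cases hj : (j : ℕ) < 2
    exacts [(hpos j hj).ne', (hneg₀ j (by omega)).ne]
  · exact (hneg a ha j).ne

theorem card_pos_eq_two_of_signs (hm : 2 ≤ m) :
    Nat.card {p : A × Fin m // 0 < f p.1 p.2} = 2 := by
  classical
  have e : {p : A × Fin m // 0 < f p.1 p.2} ≃ {a // a = a₀} × {j : Fin m // (j : ℕ) < 2} :=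
    (Equiv.subtypeEquivRight fun p : A × Fin m =>
      pos_iff_eq_and_lt_two_of_signs hpos hneg₀ hneg p.1 p.2).trans
      (Equiv.subtypeProdEquivProd (p := (· = a₀)) (q := fun j : Fin m => (j : ℕ) < 2))
  rw [Nat.card_congr e, Nat.card_prod, Nat.card_unique, one_mul, Nat.card_eq_fintype_card,
    Fintype.card_subtype, Fin.card_filter_val_lt]
  omega

end Signs

section RealCoords

variable {E V ι : Type*} [Field E] [NumberField E] [AddCommGroup V] [Module E V] [Module ℚ V]
  [IsScalarTower ℚ E V]

noncomputable def realCoords (u : Module.Basis ι E V) : V →ₗ[ℚ] (E →+* ℝ) × ι → ℝ :=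
  LinearMap.pi fun p => p.1.toRatAlgHom.toLinearMap ∘ₗ (u.coord p.2).restrictScalars ℚ

@[simp]
theorem realCoords_apply (u : Module.Basis ι E V) (x : V) (p : (E →+* ℝ) × ι) :
    realCoords u x p = p.1 (u.repr x p.2) := rfl

variable [Fintype ι] (hE : ∀ (σ : E →+* ℂ) (x : E), (σ x).im = 0) {Φ : LinearMap.BilinForm E V}
  {u : Module.Basis ι E V} (horth : ∀ i j, i ≠ j → Φ (u i) (u j) = 0)
include hE horth

theorem cast_traceComp_eq_sum_realCoords (x y : V) :
    (Φ.traceComp ℚ x y : ℝ) =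
      ∑ p : (E →+* ℝ) × ι, p.1 (Φ (u p.2) (u p.2)) * (realCoords u x p * realCoords u y p) := by
  rw [LinearMap.BilinForm.traceComp_apply, NumberField.trace_eq_sum_ringHom_real hE,
    Fintype.sum_prod_type]
  refine Finset.sum_congr rfl fun σ _ => ?_
  rw [Φ.apply_eq_sum_repr_mul_repr_of_orthogonal u horth, map_sum]
  exact Finset.sum_congr rfl fun j _ => by simp only [map_mul, realCoords_apply]; ring

theorem baseChange_traceComp_eq_sum_realCoords (ξ η : ℝ ⊗[ℚ] V) :
    (Φ.traceComp ℚ).baseChange ℝ ξ η = ∑ p : (E →+* ℝ) × ι, p.1 (Φ (u p.2) (u p.2)) *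
        ((realCoords u).liftBaseChange ℝ ξ p * (realCoords u).liftBaseChange ℝ η p) := by
  let T := (realCoords u).liftBaseChange ℝ
  suffices h : (Φ.traceComp ℚ).baseChange ℝ = ∑ p : (E →+* ℝ) × ι, p.1 (Φ (u p.2) (u p.2)) •
      (LinearMap.mul ℝ ℝ).compl₁₂ (LinearMap.proj p ∘ₗ T) (LinearMap.proj p ∘ₗ T) by
    simp [h, T]
  ext x y
  simpa [LinearMap.BilinForm.baseChange_tmul, T] using
    cast_traceComp_eq_sum_realCoords hE horth x y

theorem exists_linearEquiv_baseChange_traceComp_eq_sum (hΦ : Φ.SeparatingLeft) :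
    ∃ T : (ℝ ⊗[ℚ] V) ≃ₗ[ℝ] ((E →+* ℝ) × ι → ℝ), ∀ ξ η, (Φ.traceComp ℚ).baseChange ℝ ξ η =
      ∑ p : (E →+* ℝ) × ι, p.1 (Φ (u p.2) (u p.2)) * (T ξ p * T η p) := by
  have : Module.Finite E V := Module.Finite.of_basis u
  have : Module.Finite ℚ V := Module.Finite.trans E V
  let T := (realCoords u).liftBaseChange ℝ
  have hT : Function.Injective T := by
    refine LinearMap.ker_eq_bot.mp <| LinearMap.ker_eq_bot'.mpr fun ξ hξ =>
      (hΦ.traceComp.baseChange ℝ) ξ fun η => ?_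
    simp [baseChange_traceComp_eq_sum_realCoords hE horth, T, hξ]
  have hdim : Module.finrank ℝ (ℝ ⊗[ℚ] V) = Module.finrank ℝ ((E →+* ℝ) × ι → ℝ) := by
    rw [Module.finrank_baseChange, ← Module.finrank_mul_finrank ℚ E V,
      Module.finrank_eq_card_basis u, Module.finrank_fintype_fun_eq_card, Fintype.card_prod,
      NumberField.card_ringHom_real hE]
  exact ⟨LinearEquiv.ofBijective T
    ⟨hT, (LinearMap.injective_iff_surjective_of_finrank_eq_finrank hdim).mp hT⟩,
    baseChange_traceComp_eq_sum_realCoords hE horth⟩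

end RealCoords

/-- `E` totally real of degree `r`, `Φ` a nondegenerate symmetric
`E`-bilinear form on the `m`-dimensional (`m ≥ 2`) `E`-vector space `V` with a
`Φ`-orthogonal basis `u₁,…,u_m`, `d_j = Φ(u_j,u_j)`, and `σ₀ : E → ℝ` an embedding
with `σ₀(d₁) > 0`, `σ₀(d₂) > 0`, `σ₀(d_j) < 0` for `3 ≤ j ≤ m`, and `σ(d_j) < 0` for
all `σ ≠ σ₀` and all `j`.  Then the real quadratic form `ξ ↦ B(ξ,ξ)` on the
`(m·r)`-dimensional space `V ⊗_ℚ ℝ` (with `B` the `ℝ`-bilinear extension of `tr∘Φ`)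
has signature `(2, m·r − 2)`: it is equivalent over `ℝ` to a diagonal quadratic form
with exactly `2` coefficients `+1` and `m·r − 2` coefficients `−1`. -/
theorem stmt10 (E V : Type*) [Field E] [NumberField E]
    (htotreal : ∀ (σ : E →+* ℂ) (x : E), (σ x).im = 0)
    (r : ℕ) (hr : Module.finrank ℚ E = r)
    [AddCommGroup V] [Module E V] [Module ℚ V] [IsScalarTower ℚ E V]
    (Φ : V → V → E)
    (hΦadd1 : ∀ x x' y, Φ (x + x') y = Φ x y + Φ x' y)
    (hΦsmul1 : ∀ (e : E) (x y : V), Φ (e • x) y = e * Φ x y)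
    (hΦsymm : ∀ x y, Φ x y = Φ y x)
    (hΦnondeg : ∀ x, (∀ y, Φ x y = 0) → x = 0)
    (m : ℕ) (hm : 2 ≤ m) (u : Module.Basis (Fin m) E V)
    (horth : ∀ i j : Fin m, i ≠ j → Φ (u i) (u j) = 0)
    (d : Fin m → E) (hd : ∀ j, d j = Φ (u j) (u j))
    (σ₀ : E →+* ℝ)
    (hσ₀1 : ∀ j : Fin m, (j : ℕ) = 0 → 0 < σ₀ (d j))
    (hσ₀2 : ∀ j : Fin m, (j : ℕ) = 1 → 0 < σ₀ (d j))
    (hσ₀neg : ∀ j : Fin m, 2 ≤ (j : ℕ) → σ₀ (d j) < 0)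
    (hother : ∀ σ : E →+* ℝ, σ ≠ σ₀ → ∀ j : Fin m, σ (d j) < 0)
    (B : (ℝ ⊗[ℚ] V) →ₗ[ℝ] (ℝ ⊗[ℚ] V) →ₗ[ℝ] ℝ)
    (hB : ∀ (c c' : ℝ) (x y : V),
      B (c ⊗ₜ[ℚ] x) (c' ⊗ₜ[ℚ] y) = c * c' * ((Algebra.trace ℚ E (Φ x y) : ℚ) : ℝ)) :
    ∃ g : (ℝ ⊗[ℚ] V) ≃ₗ[ℝ] (Fin (m * r) → ℝ), ∀ ξ : ℝ ⊗[ℚ] V,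
      B ξ ξ = ∑ i : Fin (m * r),
        (if (i : ℕ) < 2 then (1 : ℝ) else -1) * (g ξ i) ^ 2 := by
  classical
  let Φl : LinearMap.BilinForm E V := LinearMap.mk₂ E Φ hΦadd1 hΦsmul1
    (fun x y y' => by rw [hΦsymm, hΦadd1, hΦsymm y, hΦsymm y'])
    (fun e x y => by rw [hΦsymm, hΦsmul1, hΦsymm, smul_eq_mul])
  have hBΦ : B = (Φl.traceComp ℚ).baseChange ℝ := by
    ext x y
    simp [hB, LinearMap.BilinForm.baseChange_tmul, Φl]
  obtain ⟨T, hT⟩ :=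
    exists_linearEquiv_baseChange_traceComp_eq_sum htotreal (Φ := Φl) (u := u) horth hΦnondeg
  have hpos : ∀ j : Fin m, (j : ℕ) < 2 → 0 < σ₀ (d j) := fun j hj => by
    obtain h | h : (j : ℕ) = 0 ∨ (j : ℕ) = 1 := by omega
    exacts [hσ₀1 j h, hσ₀2 j h]
  obtain ⟨g, hg⟩ := exists_linearEquiv_sum_mul_sq_eq_signature
    (fun p : (E →+* ℝ) × Fin m => p.1 (d p.2))
    (fun p => ne_zero_of_signs hpos hσ₀neg hother p.1 p.2)
    (by rw [Fintype.card_prod, NumberField.card_ringHom_real htotreal, hr, Fintype.card_fin,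
      mul_comm])
    (card_pos_eq_two_of_signs hpos hσ₀neg hother hm)
  refine ⟨T.trans g, fun ξ => ?_⟩
  rw [hBΦ, hT, LinearEquiv.trans_apply, ← hg]
  simp [hd, sq, Φl]
end
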